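/- Fix an integer B ≥ 2, η > 0, β ≥ 0, everywhere-positive distributions π_ref, π ∈ Δ^B, and a vector Ã ∈ ℝ^B. Let π′ be the minimizer over x ∈ Δ^B of ⟨−Ã, x⟩ + β·KL(x‖π_ref) + (1/η)·KL(x‖π). Then for every π* ∈ Δ^B: η·⟨Ã, π* − π′⟩ ≤ KL(π*‖π) − KL(π*‖π′) − KL(π′‖π) + ηβ·KL(π*‖π_ref). -/

import Mathlib

open scoped BigOperators

/-- Membership in the probability simplex Δ^B on `Fin B`. -/
def memSimplex (B : ℕ) (p : Fin B → ℝ) : Prop :=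
  (∀ a, 0 ≤ p a) ∧ ∑ a, p a = 1

/-- KL divergence between two distributions on `Fin B`
(with the convention `0 * log 0 = 0`, automatic since `Real.log 0 = 0`). -/
noncomputable def KLd (B : ℕ) (p q : Fin B → ℝ) : ℝ :=
  ∑ a, p a * Real.log (p a / q a)

lemma log_div_expand {p q : ℝ} (hp : 0 ≤ p) (hq : 0 < q) :
    p * Real.log (p / q) = p * Real.log p - p * Real.log q := by
  rcases eq_or_lt_of_le hp with h | h
  · simp [← h]
  · rw [Real.log_div h.ne' hq.ne']; ring

lemma term_ineq {p q : ℝ} (hp : 0 ≤ p) (hq : 0 < q) :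
    p - q ≤ p * Real.log (p / q) := by
  rcases eq_or_lt_of_le hp with h | h
  · rw [← h, zero_mul]; linarith
  · have h1 : Real.log (q / p) ≤ q / p - 1 :=
      Real.log_le_sub_one_of_pos (by positivity)
    have h2 : Real.log (p / q) = -Real.log (q / p) := by
      rw [← Real.log_inv]; congr 1; field_simp
    rw [h2]
    have h3 : p * (q / p - 1) = q - p := by field_simp
    nlinarith

lemma term_eq {p q : ℝ} (hp : 0 ≤ p) (hq : 0 < q)
    (h : p * Real.log (p / q) = p - q) : p = q := by
  rcases eq_or_lt_of_le hp with h0 | h0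
  · exfalso; rw [← h0, zero_mul] at h; linarith
  · by_contra hne
    have hne' : q / p ≠ 1 := by
      intro hq1; apply hne; field_simp at hq1; linarith
    have h1 : Real.log (q / p) < q / p - 1 :=
      Real.log_lt_sub_one_of_pos (by positivity) hne'
    have h2 : Real.log (p / q) = -Real.log (q / p) := by
      rw [← Real.log_inv]; congr 1; field_simp
    rw [h2] at h
    have h3 : p * (q / p - 1) = q - p := by field_simp
    nlinarith

lemma gibbs_nonneg (B : ℕ) {p q : Fin B → ℝ} (hp : memSimplex B p)
    (hq : ∀ a, 0 < q a) (hqs : ∑ a, q a = 1) : 0 ≤ KLd B p q := by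
  have h : ∑ a, (p a - q a) ≤ KLd B p q :=
    Finset.sum_le_sum fun a _ => term_ineq (hp.1 a) (hq a)
  rw [Finset.sum_sub_distrib, hp.2, hqs] at h
  linarith

lemma gibbs_eq (B : ℕ) {p q : Fin B → ℝ} (hp : memSimplex B p)
    (hq : ∀ a, 0 < q a) (hqs : ∑ a, q a = 1) (hle : KLd B p q ≤ 0) : p = q := by
  have hterm : ∀ a ∈ Finset.univ, 0 ≤ p a * Real.log (p a / q a) - (p a - q a) :=
    fun a _ => by linarith [term_ineq (hp.1 a) (hq a)]
  have hsum : ∑ a, (p a * Real.log (p a / q a) - (p a - q a)) = 0 := by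
    have h1 : ∑ a, (p a * Real.log (p a / q a) - (p a - q a))
        = KLd B p q - (∑ a, p a - ∑ a, q a) := by
      rw [KLd, Finset.sum_sub_distrib, Finset.sum_sub_distrib]
    rw [h1, hp.2, hqs]
    have := gibbs_nonneg B hp hq hqs
    linarith
  have heach := (Finset.sum_eq_zero_iff_of_nonneg hterm).1 hsum
  funext a
  have := heach a (Finset.mem_univ a)
  exact term_eq (hp.1 a) (hq a) (by linarith)

theorem stmt6 (B : ℕ) (hB : 2 ≤ B) (η β : ℝ) (hη : 0 < η) (hβ : 0 ≤ β)
    (πref πcur : Fin B → ℝ)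
    (href : memSimplex B πref) (hrefpos : ∀ a, 0 < πref a)
    (hcur : memSimplex B πcur) (hcurpos : ∀ a, 0 < πcur a)
    (A : Fin B → ℝ) (π' : Fin B → ℝ)
    (hπ' : memSimplex B π')
    (hmin : ∀ x : Fin B → ℝ, memSimplex B x →
      (∑ a, (-(A a)) * π' a) + β * KLd B π' πref + (1 / η) * KLd B π' πcur
        ≤ (∑ a, (-(A a)) * x a) + β * KLd B x πref + (1 / η) * KLd B x πcur) :
    ∀ πstar : Fin B → ℝ, memSimplex B πstar →
      η * ∑ a, A a * (πstar a - π' a)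
        ≤ KLd B πstar πcur - KLd B πstar π' - KLd B π' πcur
            + η * β * KLd B πstar πref := by
  haveI : Nonempty (Fin B) := ⟨⟨0, by omega⟩⟩
  set K : ℝ := 1 + η * β with hKdef
  have hK : 0 < K := by nlinarith
  set u : Fin B → ℝ := fun a =>
    Real.exp ((η * A a + η * β * Real.log (πref a) + Real.log (πcur a)) / K) with hudef
  have hupos : ∀ a, 0 < u a := fun a => Real.exp_pos _
  set Z : ℝ := ∑ a, u a with hZdef
  have hZ : 0 < Z := Finset.sum_pos (fun a _ => hupos a) Finset.univ_nonempty
  set g : Fin B → ℝ := fun a => u a / Z with hgdef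
  have hgpos : ∀ a, 0 < g a := fun a => by positivity
  have hgsum : ∑ a, g a = 1 := by
    simp only [hgdef, div_eq_mul_inv, ← Finset.sum_mul]
    rw [← hZdef, mul_inv_cancel₀ hZ.ne']
  have hg : memSimplex B g := ⟨fun a => (hgpos a).le, hgsum⟩
  have hAid : ∀ a, η * A a = K * Real.log (g a) - η * β * Real.log (πref a)
      - Real.log (πcur a) + K * Real.log Z := by
    intro a
    have h1 : Real.log (g a) =
        (η * A a + η * β * Real.log (πref a) + Real.log (πcur a)) / K - Real.log Z := by
      rw [hgdef]
      simp only
      rw [Real.log_div (hupos a).ne' hZ.ne', hudef]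
      simp [Real.log_exp]
    rw [h1]; field_simp; ring
  -- objective identity
  have hF : ∀ x : Fin B → ℝ, memSimplex B x →
      η * ((∑ a, (-(A a)) * x a) + β * KLd B x πref + (1 / η) * KLd B x πcur)
        = K * KLd B x g - K * Real.log Z := by
    intro x hx
    have hZx : K * Real.log Z = ∑ a, K * Real.log Z * x a := by
      rw [← Finset.mul_sum, hx.2, mul_one]
    rw [KLd, KLd, KLd]
    calc η * ((∑ a, (-(A a)) * x a) + β * (∑ a, x a * Real.log (x a / πref a))
        + (1 / η) * (∑ a, x a * Real.log (x a / πcur a)))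
        = ∑ a, (η * ((-(A a)) * x a) + η * β * (x a * Real.log (x a / πref a))
            + x a * Real.log (x a / πcur a)) := by
          simp only [Finset.sum_add_distrib, ← Finset.mul_sum]
          field_simp
      _ = ∑ a, (K * (x a * Real.log (x a / g a)) - K * Real.log Z * x a) := by
          refine Finset.sum_congr rfl fun a _ => ?_
          rw [log_div_expand (hx.1 a) (hrefpos a), log_div_expand (hx.1 a) (hcurpos a),
            log_div_expand (hx.1 a) (hgpos a)]
          linear_combination (-(x a)) * hAid a - (x a * Real.log (x a)) * hKdef
      _ = K * (∑ a, x a * Real.log (x a / g a)) - K * Real.log Z := by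
          rw [Finset.sum_sub_distrib, ← Finset.mul_sum, ← Finset.mul_sum, hx.2, mul_one]
  -- π' equals g
  have hpe : π' = g := by
    have h1 := hmin g hg
    have h2 := mul_le_mul_of_nonneg_left h1 hη.le
    rw [hF π' hπ', hF g hg] at h2
    have hgg : KLd B g g = 0 := by
      rw [KLd]
      apply Finset.sum_eq_zero
      intro a _
      rw [div_self (hgpos a).ne', Real.log_one, mul_zero]
    rw [hgg] at h2
    have hle : KLd B π' g ≤ 0 := by nlinarith
    exact gibbs_eq B hπ' hgpos hgsum hle
  subst hpe
  intro πstar hstar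
  have key : KLd B πstar πcur - KLd B πstar g - KLd B g πcur + η * β * KLd B πstar πref
      - η * ∑ a, A a * (πstar a - g a)
      = η * β * (KLd B πstar g + KLd B g πref)
        + K * Real.log Z * ((∑ a, g a) - ∑ a, πstar a) := by
    simp only [KLd, Finset.mul_sum, ← Finset.sum_sub_distrib, ← Finset.sum_add_distrib]
    refine Finset.sum_congr rfl fun a _ => ?_
    rw [log_div_expand (hstar.1 a) (hcurpos a), log_div_expand (hstar.1 a) (hgpos a),
      log_div_expand (hgpos a).le (hcurpos a), log_div_expand (hstar.1 a) (hrefpos a),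
      log_div_expand (hgpos a).le (hrefpos a)]
    linear_combination (g a - πstar a) * hAid a - ((πstar a - g a) * Real.log (g a)) * hKdef
  rw [hgsum, hstar.2, sub_self, mul_zero, add_zero] at key
  have k1 : 0 ≤ KLd B πstar g := gibbs_nonneg B hstar hgpos hgsum
  have k2 : 0 ≤ KLd B g πref := gibbs_nonneg B hg hrefpos href.2
  have k3 : 0 ≤ η * β * (KLd B πstar g + KLd B g πref) :=
    mul_nonneg (mul_nonneg hη.le hβ) (by linarith)
  linarith
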